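/- Let x_1,…,x_n be a linear decomposition of a word x with left and right complementary members p_i, q_i. Then for each i with 1 ≤ i ≤ n, there exist words f and g such that x_1·x_2⋯x_{i-1} =_π f·p_i and x_{i+1}·x_{i+2}⋯x_n =_π q_i·g. -/

import Mathlib

namespace SqFreePaper

variable {A : Type*}

/-- A word is square-free if it contains no nonempty factor of the form `s ++ s`. -/
def IsSquareFreeWord (w : List A) : Prop :=
  ∀ u s v : List A, w = u ++ s ++ s ++ v → s = []

/-- One-step rewriting relation associated with a system of defining relations `π`. -/
def OneStep (π : List A → List A → Prop) (x y : List A) : Prop :=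
  ∃ r s u v : List A, x = r ++ u ++ s ∧ y = r ++ v ++ s ∧ (π u v ∨ π v u)

/-- The congruence `=_π` generated by `π`: reflexive-transitive closure of one-step rewriting. -/
def EqRel (π : List A → List A → Prop) : List A → List A → Prop :=
  Relation.ReflTransGen (OneStep π)

/-- `w` is square-free relative to `π`: every word in its `=_π`-class is square-free. -/
def SFRel (π : List A → List A → Prop) (w : List A) : Prop :=
  ∀ z, EqRel π w z → IsSquareFreeWord z

/-- Union of two systems of defining relations. -/
def PiRel (σ ρ : List A → List A → Prop) (x y : List A) : Prop := σ x y ∨ ρ x y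

/-- The set of defining words of a system `σ`. -/
def DWords (σ : List A → List A → Prop) : Set (List A) :=
  {x | ∃ y, σ x y ∨ σ y x}

/-- The closure of `D_σ` under the congruence `=_ρ`. -/
def ClosureD (σ ρ : List A → List A → Prop) : Set (List A) :=
  {x | ∃ w ∈ DWords σ, EqRel ρ w x}

/-- The system `{(u_i, u_j) : i < j}` determined by a finite family of words. -/
def FamilyRel {n : ℕ} (u : Fin n → List A) (x y : List A) : Prop :=
  ∃ i j : Fin n, i < j ∧ x = u i ∧ y = u j

/-- `x ~ y` iff both lie in `D̄_σ` or both lie in `D̄_ρ`. -/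
def Sim (σ ρ : List A → List A → Prop) (x y : List A) : Prop :=
  (x ∈ ClosureD σ ρ ∧ y ∈ ClosureD σ ρ) ∨ (x ∈ ClosureD ρ σ ∧ y ∈ ClosureD ρ σ)

/-- `D_τ = D̄_σ ∪ D̄_ρ`. -/
def DTau (σ ρ : List A → List A → Prop) : Set (List A) :=
  ClosureD σ ρ ∪ ClosureD ρ σ

/-- The concatenation `x_a ++ x_{a+1} ++ ⋯ ++ x_{a+len-1}`. -/
def wordSeg (x : ℕ → List A) (a len : ℕ) : List A :=
  ((List.range' a len).map x).flatten

/-- Standing hypotheses of the paper: `D̄_σ`, `D̄_ρ` are finite, nonempty, disjoint,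
and closed under `=_σ`, `=_ρ` respectively. -/
def SettingHyps (σ ρ : List A → List A → Prop) : Prop :=
  (ClosureD σ ρ).Finite ∧ (ClosureD ρ σ).Finite ∧
  (ClosureD σ ρ).Nonempty ∧ (ClosureD ρ σ).Nonempty ∧
  (ClosureD σ ρ ∩ ClosureD ρ σ = ∅) ∧
  (∀ x ∈ ClosureD σ ρ, ∀ y, EqRel σ x y → y ∈ ClosureD σ ρ) ∧
  (∀ x ∈ ClosureD ρ σ, ∀ y, EqRel ρ x y → y ∈ ClosureD ρ σ)

/-- `x_1, …, x_n` (with complementary members `p_i`, `q_i`) is a linear decomposition. -/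
def IsLinDecomp (σ ρ : List A → List A → Prop) (n : ℕ) (x p q : ℕ → List A) : Prop :=
  1 ≤ n ∧
  (∀ i, 1 ≤ i → i ≤ n → x i ≠ []) ∧
  (∃ u v : ℕ → List A,
    (∀ i, 1 < i → i ≤ n → Sim σ ρ (p i ++ x i ++ q i) (q (i-1) ++ u i)) ∧
    (∀ i, 1 ≤ i → i < n → Sim σ ρ (p i ++ x i ++ q i) (v i ++ p (i+1)))) ∧
  (∀ i, 1 ≤ i → i < n → q i = [] ∨ p (i+1) = []) ∧
  p 1 = [] ∧ q n = [] ∧ (n = 1 → x 1 ∈ DTau σ ρ)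

/-- `Lin(n)`: words with a linear decomposition of at most `n` members. -/
def LinSet (σ ρ : List A → List A → Prop) (n : ℕ) : Set (List A) :=
  {w | ∃ m, 1 ≤ m ∧ m ≤ n ∧ ∃ x p q, IsLinDecomp σ ρ m x p q ∧ w = wordSeg x 1 m}

/-- `Lin = ⋃ₙ Lin(n)`: linearly decomposable words. -/
def LinAll (σ ρ : List A → List A → Prop) : Set (List A) :=
  {w | ∃ n, w ∈ LinSet σ ρ n}

/-- Occurrence `(r, d, s)` contains occurrence `(p, e, q)` (of the same word)
iff `|r| ≤ |p|` and `|s| ≤ |q|`. -/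
def Contained (p q r s : List A) : Prop := r.length ≤ p.length ∧ s.length ≤ q.length

/-- Two occurrences in `w` overlap iff some occurrence of a nonempty word is
contained in both. -/
def Overlap (w p q r s : List A) : Prop :=
  ∃ a f b : List A, f ≠ [] ∧ w = a ++ f ++ b ∧ Contained a b p q ∧ Contained a b r s

/-- `(p, e, q)` is a maximal occurrence in `w` of a word `e` in the set `L`. -/
def MaximalOcc (L : Set (List A)) (w p e q : List A) : Prop :=
  w = p ++ e ++ q ∧ e ∈ L ∧
  ∀ r d s, w = r ++ d ++ s → d ∈ L → Contained p q r s → r = p ∧ d = e ∧ s = q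

/-!
Induct along the decomposition. At the junction of `x_i` and `x_{i+1}` one of `q_i`, `p_{i+1}`
is empty. For prefixes: if `p_{i+1} = ∅` the new prefix trivially ends in it; otherwise
`q_i = ∅`, and `p_i x_i ~ v_i p_{i+1}` turns the tail `p_i x_i` of the prefix into one ending in
`p_{i+1}`. Suffixes are symmetric. Here `~` implies `=_π` because all defining words of a family
system `{(u_i, u_j) : i < j}` are equal modulo it.
-/

theorem OneStep.symm {π : List A → List A → Prop} {a b : List A} (h : OneStep π a b) :
    OneStep π b a := by
  obtain ⟨r, s, u, v, ha, hb, huv⟩ := h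
  exact ⟨r, s, v, u, hb, ha, huv.symm⟩

instance (π : List A → List A → Prop) : Std.Symm (OneStep π) := ⟨fun _ _ => OneStep.symm⟩

theorem EqRel.refl {π : List A → List A → Prop} (a : List A) : EqRel π a a :=
  Relation.ReflTransGen.refl

theorem EqRel.single {π : List A → List A → Prop} {a b : List A} (h : π a b) : EqRel π a b :=
  Relation.ReflTransGen.single ⟨[], [], a, b, by simp, by simp, .inl h⟩

theorem EqRel.symm {π : List A → List A → Prop} {a b : List A} (h : EqRel π a b) :
    EqRel π b a :=
  Std.Symm.symm (r := Relation.ReflTransGen (OneStep π)) _ _ h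

theorem EqRel.trans {π : List A → List A → Prop} {a b c : List A} (hab : EqRel π a b)
    (hbc : EqRel π b c) : EqRel π a c :=
  Relation.ReflTransGen.trans hab hbc

theorem EqRel.mono {π₁ π₂ : List A → List A → Prop} (h : ∀ a b, π₁ a b → π₂ a b)
    {a b : List A} (he : EqRel π₁ a b) : EqRel π₂ a b :=
  Relation.ReflTransGen.mono
    (fun _ _ ⟨r, s, u, v, hx, hy, huv⟩ => ⟨r, s, u, v, hx, hy, huv.imp (h u v) (h v u)⟩) _ _ he

theorem EqRel.append_left {π : List A → List A → Prop} (c : List A) {a b : List A}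
    (h : EqRel π a b) : EqRel π (c ++ a) (c ++ b) :=
  Relation.ReflTransGen.lift (c ++ ·)
    (fun _ _ ⟨r, s, u, v, hx, hy, huv⟩ => ⟨c ++ r, s, u, v, by simp [hx], by simp [hy], huv⟩)
    _ _ h

theorem EqRel.append_right {π : List A → List A → Prop} (c : List A) {a b : List A}
    (h : EqRel π a b) : EqRel π (a ++ c) (b ++ c) :=
  Relation.ReflTransGen.lift (· ++ c)
    (fun _ _ ⟨r, s, u, v, hx, hy, huv⟩ => ⟨r, s ++ c, u, v, by simp [hx], by simp [hy], huv⟩)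
    _ _ h

theorem exists_eq_of_mem_dWords_familyRel {n : ℕ} {u : Fin n → List A} {a : List A}
    (ha : a ∈ DWords (FamilyRel u)) : ∃ i, a = u i := by
  obtain ⟨_, ⟨i, _, _, rfl, _⟩ | ⟨_, j, _, _, rfl⟩⟩ := ha
  exacts [⟨i, rfl⟩, ⟨j, rfl⟩]

theorem eqRel_familyRel_of_mem_dWords {n : ℕ} {u : Fin n → List A} {a b : List A}
    (ha : a ∈ DWords (FamilyRel u)) (hb : b ∈ DWords (FamilyRel u)) :
    EqRel (FamilyRel u) a b := by
  obtain ⟨i, rfl⟩ := exists_eq_of_mem_dWords_familyRel ha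
  obtain ⟨j, rfl⟩ := exists_eq_of_mem_dWords_familyRel hb
  rcases lt_trichotomy i j with h | rfl | h
  · exact .single ⟨i, j, h, rfl, rfl⟩
  · exact EqRel.refl _
  · exact (EqRel.single ⟨j, i, h, rfl, rfl⟩).symm

-- From `D̄_σ` down to `D_σ` by `=_ρ`, across by `=_σ`, and back up by `=_ρ`.
theorem Sim.eqRel_piRel {σ ρ : List A → List A → Prop}
    (hσ : ∀ a ∈ DWords σ, ∀ b ∈ DWords σ, EqRel σ a b)
    (hρ : ∀ a ∈ DWords ρ, ∀ b ∈ DWords ρ, EqRel ρ a b)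
    {a b : List A} (h : Sim σ ρ a b) : EqRel (PiRel σ ρ) a b := by
  have ofσ {a b : List A} : EqRel σ a b → EqRel (PiRel σ ρ) a b := .mono fun _ _ => .inl
  have ofρ {a b : List A} : EqRel ρ a b → EqRel (PiRel σ ρ) a b := .mono fun _ _ => .inr
  rcases h with ⟨⟨wa, hwa, ha⟩, ⟨wb, hwb, hb⟩⟩ | ⟨⟨wa, hwa, ha⟩, ⟨wb, hwb, hb⟩⟩
  · exact ((ofρ ha.symm).trans (ofσ (hσ wa hwa wb hwb))).trans (ofρ hb)
  · exact ((ofσ ha.symm).trans (ofρ (hρ wa hwa wb hwb))).trans (ofσ hb)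

@[simp]
theorem wordSeg_zero (x : ℕ → List A) (a : ℕ) : wordSeg x a 0 = [] := rfl

theorem wordSeg_succ (x : ℕ → List A) (a len : ℕ) :
    wordSeg x a (len + 1) = wordSeg x a len ++ x (a + len) := by
  simp [wordSeg, List.range'_concat]

theorem wordSeg_succ' (x : ℕ → List A) (a len : ℕ) :
    wordSeg x a (len + 1) = x a ++ wordSeg x (a + 1) len := by
  simp [wordSeg, List.range'_succ]

section Complements

variable {π : List A → List A → Prop} {n : ℕ} {x p q : ℕ → List A}

theorem exists_eqRel_wordSeg_prefix {v : ℕ → List A}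
    (hstep : ∀ i, 1 ≤ i → i < n → EqRel π (p i ++ x i ++ q i) (v i ++ p (i + 1)))
    (hsep : ∀ i, 1 ≤ i → i < n → q i = [] ∨ p (i + 1) = []) (hp : p 1 = []) :
    ∀ k < n, ∃ f, EqRel π (wordSeg x 1 k) (f ++ p (k + 1)) := by
  intro k
  induction k with
  | zero => exact fun _ => ⟨[], by simpa [hp] using EqRel.refl []⟩
  | succ k ih =>
    intro hk
    obtain ⟨f, hf⟩ := ih (by omega)
    have hseg : EqRel π (wordSeg x 1 (k + 1)) (f ++ (p (k + 1) ++ x (k + 1))) := by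
      rw [wordSeg_succ, add_comm 1 k]
      simpa using hf.append_right (x (k + 1))
    rcases hsep (k + 1) (by omega) hk with hq | hp'
    · refine ⟨f ++ v (k + 1), ?_⟩
      have := (hstep (k + 1) (by omega) hk).append_left f
      simpa [hq] using hseg.trans (by simpa [hq] using this)
    · exact ⟨f ++ p (k + 1) ++ x (k + 1), by simpa [hp'] using hseg⟩

theorem exists_eqRel_wordSeg_suffix {u : ℕ → List A}
    (hstep : ∀ i, 1 < i → i ≤ n → EqRel π (p i ++ x i ++ q i) (q (i - 1) ++ u i))
    (hsep : ∀ i, 1 ≤ i → i < n → q i = [] ∨ p (i + 1) = []) (hq : q n = []) :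
    ∀ k i, 1 ≤ i → i + k = n → ∃ g, EqRel π (wordSeg x (i + 1) k) (q i ++ g) := by
  intro k
  induction k with
  | zero =>
    rintro i - (rfl : i = n)
    exact ⟨[], by simpa [hq] using EqRel.refl []⟩
  | succ k ih =>
    intro i hi hik
    obtain ⟨g, hg⟩ := ih (i + 1) (by omega) (by omega)
    have hseg : EqRel π (wordSeg x (i + 1) (k + 1)) (x (i + 1) ++ q (i + 1) ++ g) := by
      rw [wordSeg_succ']
      simpa using hg.append_left (x (i + 1))
    rcases hsep i hi (by omega) with hq' | hp'
    · exact ⟨x (i + 1) ++ q (i + 1) ++ g, by simpa [hq'] using hseg⟩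
    · refine ⟨u (i + 1) ++ g, ?_⟩
      have := (hstep (i + 1) (by omega) (by omega)).append_right g
      simpa using hseg.trans (by simpa [hp'] using this)

end Complements

theorem linDecomp_prefix_suffix_general {A : Type*} {nu nv : ℕ}
    (u : Fin nu → List A) (v : Fin nv → List A)
    (σ ρ : List A → List A → Prop) (hσ : σ = FamilyRel u) (hρ : ρ = FamilyRel v)
    (n : ℕ) (x p q : ℕ → List A) (hlin : IsLinDecomp σ ρ n x p q) :
    ∀ i, 1 ≤ i → i ≤ n → ∃ f g : List A,
      EqRel (PiRel σ ρ) (wordSeg x 1 (i-1)) (f ++ p i) ∧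
      EqRel (PiRel σ ρ) (wordSeg x (i+1) (n-i)) (q i ++ g) := by
  obtain ⟨-, -, ⟨us, vs, hleft, hright⟩, hsep, hp, hq, -⟩ := hlin
  subst hσ hρ
  have hsim {a b : List A} : Sim (FamilyRel u) (FamilyRel v) a b →
      EqRel (PiRel (FamilyRel u) (FamilyRel v)) a b :=
    Sim.eqRel_piRel (fun _ ha _ hb => eqRel_familyRel_of_mem_dWords ha hb)
      (fun _ ha _ hb => eqRel_familyRel_of_mem_dWords ha hb)
  intro i hi hin
  obtain ⟨f, hf⟩ := exists_eqRel_wordSeg_prefix (fun j hj hjn => hsim (hright j hj hjn))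
    hsep hp (i - 1) (by omega)
  obtain ⟨g, hg⟩ := exists_eqRel_wordSeg_suffix (fun j hj hjn => hsim (hleft j hj hjn))
    hsep hq (n - i) i hi (by omega)
  exact ⟨f, g, by rwa [Nat.sub_add_cancel hi] at hf, hg⟩

/-- Lemma 2.1: for any linear decomposition, the prefix
`x_1⋯x_{i-1}` is `=_π`-equal to some `f ++ p_i` and the suffix
`x_{i+1}⋯x_n` to `q_i ++ g`. -/
theorem linDecomp_prefix_suffix {A : Type*} {nu nv : ℕ}
    (u : Fin nu → List A) (v : Fin nv → List A)
    (hu : Function.Injective u) (hv : Function.Injective v)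
    (σ ρ : List A → List A → Prop) (hσ : σ = FamilyRel u) (hρ : ρ = FamilyRel v)
    (hset : SettingHyps σ ρ)
    (n : ℕ) (x p q : ℕ → List A) (hlin : IsLinDecomp σ ρ n x p q) :
    ∀ i, 1 ≤ i → i ≤ n → ∃ f g : List A,
      EqRel (PiRel σ ρ) (wordSeg x 1 (i-1)) (f ++ p i) ∧
      EqRel (PiRel σ ρ) (wordSeg x (i+1) (n-i)) (q i ++ g) :=
  linDecomp_prefix_suffix_general u v σ ρ hσ hρ n x p q hlin
end SqFreePaper
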